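/- Let ρ ∈ (0,1) and γ > 0. There exists a constant C > 0 such that for every λ > 0 and every t > 0 one has λ·B_ρ(λ,t) ≤ C · min{t^{−1}, t^{ρ−1}}. -/

import Mathlib

open MeasureTheory Real Set

/-- The function `B_ρ(λ,t)` from the Rayleigh–Stokes problem. -/
noncomputable def Brho (ρ γ lam t : ℝ) : ℝ :=
  (γ / π) * ∫ r in Ioi (0 : ℝ),
    Real.exp (-r * t) * (lam * r ^ ρ * Real.sin (ρ * π)) /
      ((lam - r + lam * γ * r ^ ρ * Real.cos (ρ * π)) ^ 2 +
        (lam * γ * r ^ ρ * Real.sin (ρ * π)) ^ 2)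

/-!
Dropping `(λ - r + λγ r^ρ cos ρπ)²` from the denominator bounds `λ` times the integrand by
`r^{-ρ} e^{-rt} / (γ² sin ρπ)`, whose integral is `Γ(1-ρ) t^{ρ-1}`.

For the bound by `t⁻¹`, use `e^{-rt} ≤ (rt)⁻¹` and bound the denominator below by
`(1 - |cos ρπ|) ((r - λ)² + (λγ r^ρ)²)`. The resulting integrand is at most a constant times the
derivative of `arctan ((r - λ) / (λγ r^ρ))`, which increases from `-π/2` to `π/2` on `(0, ∞)`;
so the bound does not depend on `λ`.
-/

open Filter Topology

theorem setIntegral_mono_on_of_nonneg {α : Type*} [MeasurableSpace α] {μ : Measure α}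
    {f g : α → ℝ} {s : Set α} (hs : MeasurableSet s) (hf : ∀ x ∈ s, 0 ≤ f x)
    (hg : IntegrableOn g s μ) (hfg : ∀ x ∈ s, f x ≤ g x) :
    ∫ x in s, f x ∂μ ≤ ∫ x in s, g x ∂μ :=
  integral_mono_of_nonneg (ae_restrict_of_forall_mem hs hf) hg (ae_restrict_of_forall_mem hs hfg)

theorem integral_Ioi_of_hasDerivAt_of_nonneg_of_tendsto_nhdsGT {g g' : ℝ → ℝ} {a l₀ l : ℝ}
    (hderiv : ∀ x ∈ Ioi a, HasDerivAt g (g' x) x) (hg' : ∀ x ∈ Ioi a, 0 ≤ g' x)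
    (hg₀ : Tendsto g (𝓝[>] a) (𝓝 l₀)) (hg : Tendsto g atTop (𝓝 l)) :
    IntegrableOn g' (Ioi a) ∧ ∫ x in Ioi a, g' x = l - l₀ := by
  classical
  set G := Function.update g a l₀
  have hcont : ContinuousWithinAt G (Ici a) a := by
    rwa [continuousWithinAt_update_same, Ici_sdiff_left]
  have hderivG : ∀ x ∈ Ioi a, HasDerivAt G (g' x) x := fun x hx =>
    (hderiv x hx).congr_of_eventuallyEq <| by
      filter_upwards [eventually_ne_nhds (ne_of_gt hx)] with y hy
      exact Function.update_of_ne hy _ _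
  have hG : Tendsto G atTop (𝓝 l) := hg.congr' <| by
    filter_upwards [eventually_ne_atTop a] with y hy
    exact (Function.update_of_ne hy _ _).symm
  refine ⟨integrableOn_Ioi_deriv_of_nonneg hcont hderivG hg' hG, ?_⟩
  rw [integral_Ioi_of_hasDerivAt_of_nonneg hcont hderivG hg' hG]
  simp [G]

section ArctanKernel

variable {ρ a κ : ℝ}

theorem hasDerivAt_arctan_sub_div_mul_rpow (hκ : κ ≠ 0) {r : ℝ} (hr : 0 < r) :
    HasDerivAt (fun x => arctan ((x - a) / (κ * x ^ ρ)))
      (κ * ((1 - ρ) * r + ρ * a) * r ^ (ρ - 1) / ((r - a) ^ 2 + (κ * r ^ ρ) ^ 2)) r := by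
  have hX : 0 < r ^ ρ := rpow_pos_of_pos hr ρ
  have hden : κ * r ^ ρ ≠ 0 := mul_ne_zero hκ hX.ne'
  have hq : HasDerivAt (fun x => (x - a) / (κ * x ^ ρ))
      ((1 * (κ * r ^ ρ) - (r - a) * (κ * (ρ * r ^ (ρ - 1)))) / (κ * r ^ ρ) ^ 2) r :=
    ((hasDerivAt_id r).sub_const a).div
      ((hasDerivAt_rpow_const (Or.inl hr.ne')).const_mul κ) hden
  convert hq.arctan using 1
  rw [rpow_sub_one hr.ne']
  field_simp
  ring

theorem tendsto_arctan_sub_div_mul_rpow_nhdsGT_zero (hρ : 0 < ρ) (ha : 0 < a) (hκ : 0 < κ) :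
    Tendsto (fun x => arctan ((x - a) / (κ * x ^ ρ))) (𝓝[>] 0) (𝓝 (-(π / 2))) := by
  have hpow : Tendsto (fun x : ℝ => κ * x ^ ρ) (𝓝[>] 0) (𝓝[>] 0) := by
    refine tendsto_nhdsWithin_of_tendsto_nhds_of_eventually_within _ ?_ ?_
    · have := ((continuousAt_id.rpow_const (Or.inr hρ.le)).const_mul κ (x := (0 : ℝ))).tendsto
      simpa [zero_rpow hρ.ne'] using this.mono_left nhdsWithin_le_nhds
    · filter_upwards [self_mem_nhdsWithin] with x hx
      exact mul_pos hκ (rpow_pos_of_pos hx ρ)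
  have hsub : Tendsto (fun x : ℝ => x - a) (𝓝[>] 0) (𝓝 (-a)) := by
    simpa using ((continuous_sub_right a).tendsto 0).mono_left nhdsWithin_le_nhds
  have := (hsub.neg_mul_atTop (neg_lt_zero.mpr ha) (tendsto_inv_nhdsGT_zero.comp hpow))
  exact (tendsto_nhds_of_tendsto_nhdsWithin tendsto_arctan_atBot).comp this

theorem tendsto_arctan_sub_div_mul_rpow_atTop (hρ : ρ < 1) (hκ : 0 < κ) :
    Tendsto (fun x => arctan ((x - a) / (κ * x ^ ρ))) atTop (𝓝 (π / 2)) := by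
  have hlin : Tendsto (fun x : ℝ => 1 - a * x⁻¹) atTop (𝓝 1) := by
    simpa using (tendsto_inv_atTop_zero.const_mul a).const_sub 1
  have hpow : Tendsto (fun x : ℝ => x ^ (1 - ρ) / κ) atTop atTop :=
    (tendsto_rpow_atTop (sub_pos.mpr hρ)).atTop_div_const hκ
  have h : Tendsto (fun x => (x - a) / (κ * x ^ ρ)) atTop atTop :=
    (hlin.pos_mul_atTop one_pos hpow).congr' <| by
      filter_upwards [eventually_gt_atTop 0] with x hx
      rw [rpow_sub hx, rpow_one]
      field_simp
  exact (tendsto_nhds_of_tendsto_nhdsWithin tendsto_arctan_atTop).comp h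

theorem integral_deriv_arctan_sub_div_mul_rpow (hρ0 : 0 < ρ) (hρ1 : ρ < 1) (ha : 0 < a)
    (hκ : 0 < κ) :
    IntegrableOn (fun r => κ * ((1 - ρ) * r + ρ * a) * r ^ (ρ - 1) /
        ((r - a) ^ 2 + (κ * r ^ ρ) ^ 2)) (Ioi 0) ∧
      ∫ r in Ioi 0, κ * ((1 - ρ) * r + ρ * a) * r ^ (ρ - 1) /
        ((r - a) ^ 2 + (κ * r ^ ρ) ^ 2) = π := by
  have h := integral_Ioi_of_hasDerivAt_of_nonneg_of_tendsto_nhdsGT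
    (fun r hr => hasDerivAt_arctan_sub_div_mul_rpow hκ.ne' hr) (fun r (hr : 0 < r) => ?_)
    (tendsto_arctan_sub_div_mul_rpow_nhdsGT_zero hρ0 ha hκ)
    (tendsto_arctan_sub_div_mul_rpow_atTop (a := a) hρ1 hκ)
  · exact ⟨h.1, by rw [h.2]; ring⟩
  · have : 0 ≤ (1 - ρ) * r + ρ * a := by nlinarith
    positivity

end ArctanKernel

theorem one_sub_abs_cos_mul_le (a X θ : ℝ) :
    (1 - |cos θ|) * (a ^ 2 + X ^ 2) ≤ (a + X * cos θ) ^ 2 + (X * sin θ) ^ 2 := by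
  have := sin_sq_add_cos_sq θ
  rcases abs_cases (cos θ) with ⟨h, _⟩ | ⟨h, _⟩ <;> rw [h] <;>
    nlinarith [sq_nonneg (a + X), sq_nonneg (a - X)]

noncomputable def brhoIntegrand (ρ γ lam t r : ℝ) : ℝ :=
  exp (-r * t) * (lam * r ^ ρ * sin (ρ * π)) /
    ((lam - r + lam * γ * r ^ ρ * cos (ρ * π)) ^ 2 + (lam * γ * r ^ ρ * sin (ρ * π)) ^ 2)

theorem mul_Brho_eq (ρ γ lam t : ℝ) :
    lam * Brho ρ γ lam t = γ / π * ∫ r in Ioi 0, lam * brhoIntegrand ρ γ lam t r := by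
  rw [integral_const_mul]
  unfold Brho brhoIntegrand
  ring

theorem sin_mul_pi_pos {ρ : ℝ} (hρ : ρ ∈ Ioo 0 1) : 0 < sin (ρ * π) :=
  sin_pos_of_pos_of_lt_pi (by nlinarith [hρ.1, pi_pos]) (by nlinarith [hρ.2, pi_pos])

theorem one_sub_abs_cos_mul_pi_pos {ρ : ℝ} (hρ : ρ ∈ Ioo 0 1) : 0 < 1 - |cos (ρ * π)| := by
  have hs := sin_mul_pi_pos hρ
  nlinarith [sq_abs (cos (ρ * π)), abs_nonneg (cos (ρ * π)), sin_sq_add_cos_sq (ρ * π)]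

section Integrand

variable {ρ γ lam t r : ℝ}

theorem brhoIntegrand_nonneg (hs : 0 ≤ sin (ρ * π)) (hlam : 0 ≤ lam) (hr : 0 ≤ r) :
    0 ≤ brhoIntegrand ρ γ lam t r :=
  div_nonneg (mul_nonneg (exp_pos _).le (by positivity)) (by positivity)

theorem mul_brhoIntegrand_le_rpow_mul_exp (hs : 0 < sin (ρ * π)) (hγ : γ ≠ 0) (hlam : 0 < lam)
    (hr : 0 < r) :
    lam * brhoIntegrand ρ γ lam t r ≤ (γ ^ 2 * sin (ρ * π))⁻¹ * (r ^ (-ρ) * exp (-(t * r))) := by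
  calc lam * brhoIntegrand ρ γ lam t r
      = lam ^ 2 * r ^ ρ * sin (ρ * π) * exp (-(t * r)) /
          ((lam - r + lam * γ * r ^ ρ * cos (ρ * π)) ^ 2 +
            (lam * γ * r ^ ρ * sin (ρ * π)) ^ 2) := by
        rw [brhoIntegrand, mul_comm t r, neg_mul]; ring
    _ ≤ lam ^ 2 * r ^ ρ * sin (ρ * π) * exp (-(t * r)) / (lam * γ * r ^ ρ * sin (ρ * π)) ^ 2 :=
        div_le_div_of_nonneg_left (by positivity) (by positivity)
          (le_add_of_nonneg_left (sq_nonneg _))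
    _ = (γ ^ 2 * sin (ρ * π))⁻¹ * (r ^ (-ρ) * exp (-(t * r))) := by
        rw [rpow_neg hr.le]; field_simp

theorem mul_brhoIntegrand_le_deriv_arctan (hρ : ρ ∈ Ioo 0 1) (hγ : 0 < γ) (hlam : 0 < lam)
    (ht : 0 < t) (hr : 0 < r) :
    lam * brhoIntegrand ρ γ lam t r ≤ sin (ρ * π) / ((1 - |cos (ρ * π)|) * t * ρ * γ) *
      (lam * γ * ((1 - ρ) * r + ρ * lam) * r ^ (ρ - 1) /
        ((r - lam) ^ 2 + (lam * γ * r ^ ρ) ^ 2)) := by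
  have hs := sin_mul_pi_pos hρ
  have hc := one_sub_abs_cos_mul_pi_pos hρ
  have hρ0 := hρ.1
  have hexp : exp (-r * t) ≤ (r * t)⁻¹ := by
    rw [neg_mul, exp_neg]
    exact inv_anti₀ (by positivity) (by linarith [add_one_le_exp (r * t)])
  have hden := one_sub_abs_cos_mul_le (lam - r) (lam * γ * r ^ ρ) (ρ * π)
  rw [show (lam - r) ^ 2 = (r - lam) ^ 2 by ring] at hden
  calc lam * brhoIntegrand ρ γ lam t r
      = lam ^ 2 * r ^ ρ * sin (ρ * π) * exp (-r * t) /
          ((lam - r + lam * γ * r ^ ρ * cos (ρ * π)) ^ 2 +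
            (lam * γ * r ^ ρ * sin (ρ * π)) ^ 2) := by
        rw [brhoIntegrand]; ring
    _ ≤ lam ^ 2 * r ^ ρ * sin (ρ * π) * (r * t)⁻¹ /
          ((1 - |cos (ρ * π)|) * ((r - lam) ^ 2 + (lam * γ * r ^ ρ) ^ 2)) := by
        gcongr
    _ = sin (ρ * π) / ((1 - |cos (ρ * π)|) * t * ρ * γ) *
          (lam * γ * (ρ * lam) * r ^ (ρ - 1) / ((r - lam) ^ 2 + (lam * γ * r ^ ρ) ^ 2)) := by
        rw [rpow_sub_one hr.ne']; field_simp
    _ ≤ _ := by gcongr; nlinarith [hρ.2]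

end Integrand

section Bounds

variable {ρ γ lam t : ℝ}

theorem mul_Brho_le_rpow (hρ : ρ ∈ Ioo 0 1) (hγ : 0 < γ) (hlam : 0 < lam) (ht : 0 < t) :
    lam * Brho ρ γ lam t ≤ Gamma (1 - ρ) / (π * γ * sin (ρ * π)) * t ^ (ρ - 1) := by
  have hs := sin_mul_pi_pos hρ
  have hint : IntegrableOn (fun r => r ^ (-ρ) * exp (-(t * r))) (Ioi 0) := by
    simpa using integrableOn_rpow_mul_exp_neg_mul_rpow (by linarith [hρ.2]) one_pos ht
  have hΓ : ∫ r in Ioi 0, r ^ (-ρ) * exp (-(t * r)) = Gamma (1 - ρ) * t ^ (ρ - 1) := by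
    have := integral_rpow_mul_exp_neg_mul_Ioi (sub_pos.mpr hρ.2) ht
    rw [sub_sub_cancel_left, one_div, inv_rpow ht.le, ← rpow_neg ht.le, neg_sub] at this
    rw [this, mul_comm]
  rw [mul_Brho_eq]
  calc γ / π * ∫ r in Ioi 0, lam * brhoIntegrand ρ γ lam t r
      ≤ γ / π * ∫ r in Ioi 0, (γ ^ 2 * sin (ρ * π))⁻¹ * (r ^ (-ρ) * exp (-(t * r))) :=
        mul_le_mul_of_nonneg_left (setIntegral_mono_on_of_nonneg measurableSet_Ioi
            (fun r hr => mul_nonneg hlam.le (brhoIntegrand_nonneg hs.le hlam.le (le_of_lt hr)))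
            (hint.const_mul _) (fun r hr => mul_brhoIntegrand_le_rpow_mul_exp hs hγ.ne' hlam hr))
          (by positivity)
    _ = Gamma (1 - ρ) / (π * γ * sin (ρ * π)) * t ^ (ρ - 1) := by
        rw [integral_const_mul, hΓ]
        field_simp

theorem mul_Brho_le_inv (hρ : ρ ∈ Ioo 0 1) (hγ : 0 < γ) (hlam : 0 < lam) (ht : 0 < t) :
    lam * Brho ρ γ lam t ≤ sin (ρ * π) / (ρ * (1 - |cos (ρ * π)|)) * t⁻¹ := by
  have hs := sin_mul_pi_pos hρ
  have hc := one_sub_abs_cos_mul_pi_pos hρ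
  obtain ⟨hint, hπ⟩ :=
    integral_deriv_arctan_sub_div_mul_rpow hρ.1 hρ.2 hlam (mul_pos hlam hγ)
  rw [mul_Brho_eq]
  calc γ / π * ∫ r in Ioi 0, lam * brhoIntegrand ρ γ lam t r
      ≤ γ / π * ∫ r in Ioi 0, sin (ρ * π) / ((1 - |cos (ρ * π)|) * t * ρ * γ) *
          (lam * γ * ((1 - ρ) * r + ρ * lam) * r ^ (ρ - 1) /
            ((r - lam) ^ 2 + (lam * γ * r ^ ρ) ^ 2)) :=
        mul_le_mul_of_nonneg_left (setIntegral_mono_on_of_nonneg measurableSet_Ioi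
            (fun r hr => mul_nonneg hlam.le (brhoIntegrand_nonneg hs.le hlam.le (le_of_lt hr)))
            (hint.const_mul _) (fun r hr => mul_brhoIntegrand_le_deriv_arctan hρ hγ hlam ht hr))
          (by positivity)
    _ = sin (ρ * π) / (ρ * (1 - |cos (ρ * π)|)) * t⁻¹ := by
        rw [integral_const_mul, hπ]
        field_simp

end Bounds

/-- `λ B_ρ(λ,t) ≤ C min{t⁻¹, t^{ρ−1}}` for all `λ > 0`, `t > 0`. -/
theorem Brho_decay (ρ γ : ℝ) (hρ : ρ ∈ Ioo (0 : ℝ) 1) (hγ : 0 < γ) :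
    ∃ C > (0 : ℝ), ∀ lam > (0 : ℝ), ∀ t > (0 : ℝ),
      lam * Brho ρ γ lam t ≤ C * min t⁻¹ (t ^ (ρ - 1)) := by
  have hs := sin_mul_pi_pos hρ
  have hc := one_sub_abs_cos_mul_pi_pos hρ
  set C₁ := sin (ρ * π) / (ρ * (1 - |cos (ρ * π)|))
  set C₂ := Gamma (1 - ρ) / (π * γ * sin (ρ * π))
  have hC₁ : 0 < C₁ := div_pos hs (mul_pos hρ.1 hc)
  refine ⟨max C₁ C₂, lt_max_of_lt_left hC₁, fun lam hlam t ht => ?_⟩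
  rw [mul_min_of_nonneg _ _ (le_max_of_le_left hC₁.le)]
  exact le_min ((mul_Brho_le_inv hρ hγ hlam ht).trans (by gcongr; exact le_max_left _ _))
    ((mul_Brho_le_rpow hρ hγ hlam ht).trans (by gcongr; exact le_max_right _ _))
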